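/- Let q be an odd prime power and k a field of characteristic 2. The permutation module V = k[P^1(F_q)] for PGL_2(F_q) is uniserial with composition series of factors (V_1, V_2, V_1), where V_1 is the trivial 1-dimensional module and V_2 is the (q-1)-dimensional simple quotient of the augmentation submodule by V_1. -/

import Mathlib

open Matrix
open scoped LinearAlgebra.Projectivization

/-- The action of `g ∈ GL₂(F)` on the projective line `ℙ¹(F)`; this action factors through
`PGL₂(F)`, and a subspace of the permutation module is `PGL₂`-invariant iff it is invariant
under this `GL₂`-action. -/
noncomputable def projAct (F : Type) [Field F] (g : GL (Fin 2) F) :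
    ℙ F (Fin 2 → F) → ℙ F (Fin 2 → F) :=
  Projectivization.map
    ((Matrix.GeneralLinearGroup.toLin g).toLinearEquiv : (Fin 2 → F) →ₗ[F] (Fin 2 → F))
    (Matrix.GeneralLinearGroup.toLin g).toLinearEquiv.injective

/-!
In characteristic `2` with `q` odd, `ℙ¹(F_q)` has the even number `q + 1` of points, so the line
of constants lies in the augmentation hyperplane `W`, and it suffices to show that an invariant `U`
containing a non-constant `f` contains `W`. As `GL₂` is 2-transitive on `ℙ¹`, the translates of a
single `δ_a - δ_b` span `W`. To find one in `U`, average `f` over the translations `z ↦ z + b`: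
since `q ≡ 1` this gives `S • 1 + (∑ f) • δ_∞` with `S = ∑_{y ∈ F} f y`. If `∑ f = 0` instead,
move two points where `f` differs to `0` and `∞` and average over the scalings `z ↦ u z`: since
`q - 1 ≡ 0` this gives `S' • (1 + δ₀ + δ_∞)` with `S' = f 0 + f ∞ ≠ 0`. Either way, subtracting
the translate by an element that moves exactly one of the deltas leaves a nonzero multiple of
some `δ_a - δ_c`.
-/

open MulAction OnePoint

namespace PermutationModule

variable {G α k : Type*} [Group G] [MulAction G α]

section CommRing

variable [CommRing k]

def IsInvariant (G : Type*) [Group G] [MulAction G α] (U : Submodule k (α → k)) : Prop :=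
  ∀ g : G, ∀ f ∈ U, LinearMap.funLeft k k (g • · : α → α) f ∈ U

section Transitive

variable [DecidableEq α]

lemma funLeft_single (g : G) (a : α) (c : k) :
    LinearMap.funLeft k k (g • · : α → α) (Pi.single a c) = Pi.single (g⁻¹ • a) c := by
  funext x
  simp only [LinearMap.funLeft_apply, Pi.single_apply, eq_inv_smul_iff]

variable [IsMultiplyPretransitive G α 2] {U : Submodule k (α → k)}

lemma single_sub_single_mem_of_mem (hU : IsInvariant G U) {a b c d : α} (hab : a ≠ b)
    (hcd : c ≠ d) (h : Pi.single a 1 - Pi.single b 1 ∈ U) :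
    Pi.single c 1 - Pi.single d 1 ∈ U := by
  obtain ⟨g, rfl, rfl⟩ := is_two_pretransitive_iff.mp ‹_› hcd hab
  simpa [funLeft_single] using hU g _ h

lemma single_sub_single_mem_of_const_add_mem (hU : IsInvariant G U) {a b c : α} (hab : a ≠ b)
    (hcb : c ≠ b) {s t t' : k} (ht : IsUnit t)
    (hv : Function.const α s + Pi.single a t + Pi.single b t' ∈ U) :
    Pi.single a 1 - Pi.single c 1 ∈ U := by
  obtain ⟨g, hgc, hgb⟩ := is_two_pretransitive_iff.mp ‹_› hcb hab
  have hconst : LinearMap.funLeft k k (g • · : α → α) (Function.const α s) = Function.const α s :=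
    rfl
  have hdiff := U.sub_mem hv (hU g _ hv)
  rw [map_add, map_add, hconst, funLeft_single, funLeft_single, inv_smul_eq_iff.mpr hgc.symm,
    inv_smul_eq_iff.mpr hgb.symm] at hdiff
  obtain ⟨t, rfl⟩ := ht
  rw [add_sub_add_right_eq_sub, add_sub_add_left_eq_sub, ← Submodule.smul_mem_iff' U t⁻¹,
    Units.smul_def] at hdiff
  simpa only [smul_sub, ← Pi.single_smul', smul_eq_mul, Units.inv_mul] using hdiff

end Transitive

variable [Fintype α]

def augmentationMap (α k : Type*) [Fintype α] [CommRing k] : (α → k) →ₗ[k] k :=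
  Fintype.linearCombination k fun _ => 1

def augmentation (α k : Type*) [Fintype α] [CommRing k] : Submodule k (α → k) :=
  LinearMap.ker (augmentationMap α k)

lemma mem_augmentation {f : α → k} : f ∈ augmentation α k ↔ ∑ x, f x = 0 := by
  simp [augmentation, augmentationMap, Fintype.linearCombination_apply]

lemma span_one_le_augmentation (h : (Fintype.card α : k) = 0) :
    Submodule.span k {fun _ => (1 : k)} ≤ augmentation α k := by
  rw [Submodule.span_le, Set.singleton_subset_iff, SetLike.mem_coe, mem_augmentation]
  simpa using h

lemma augmentation_le_of_single_sub_single_mem [DecidableEq α] [IsMultiplyPretransitive G α 2]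
    {U : Submodule k (α → k)} (hU : IsInvariant G U) {a b : α} (hab : a ≠ b)
    (h : Pi.single a 1 - Pi.single b 1 ∈ U) : augmentation α k ≤ U := by
  intro f hf
  rw [mem_augmentation] at hf
  have hf_eq : f = ∑ x, f x • (Pi.single x 1 - Pi.single b 1) := by
    simp only [smul_sub, Finset.sum_sub_distrib, ← Finset.sum_smul, hf, zero_smul, sub_zero]
    exact pi_eq_sum_univ' f
  rw [hf_eq]
  refine Submodule.sum_mem _ fun x _ => Submodule.smul_mem _ _ ?_
  rcases eq_or_ne x b with rfl | hxb
  · simp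
  · exact single_sub_single_mem_of_mem hU hab hxb h

end CommRing

section Field

variable [Field k] [Nonempty α]

lemma const_one_ne_zero : (fun _ => (1 : k)) ≠ (0 : α → k) := by
  simp [funext_iff]

lemma finrank_span_one : Module.finrank k (Submodule.span k {fun _ : α => (1 : k)}) = 1 :=
  finrank_span_singleton const_one_ne_zero

lemma isAtom_span_one : IsAtom (Submodule.span k {fun _ : α => (1 : k)}) :=
  nonzero_span_atom _ const_one_ne_zero

variable [Fintype α]

lemma surjective_augmentationMap : Function.Surjective (augmentationMap α k) := by
  classical
  intro c
  refine ⟨Pi.single (Classical.arbitrary α) c, ?_⟩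
  simp [augmentationMap, Fintype.linearCombination_apply]

lemma finrank_augmentation : Module.finrank k (augmentation α k) = Fintype.card α - 1 := by
  have h := LinearMap.finrank_range_add_finrank_ker (augmentationMap α k)
  rw [LinearMap.range_eq_top.mpr surjective_augmentationMap, finrank_top, Module.finrank_self,
    Module.finrank_fintype_fun_eq_card] at h
  rw [augmentation]
  omega

lemma isCoatom_augmentation : IsCoatom (augmentation α k) :=
  LinearMap.isCoatom_ker_of_surjective surjective_augmentationMap

lemma span_one_lt_augmentation (h : (Fintype.card α : k) = 0) (hα : 2 < Fintype.card α) :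
    Submodule.span k {fun _ => (1 : k)} < augmentation α k := by
  refine (span_one_le_augmentation h).lt_of_ne fun heq => ?_
  have := congrArg (fun V : Submodule k (α → k) => Module.finrank k V) heq
  simp only [finrank_span_one, finrank_augmentation] at this
  omega

lemma finrank_augmentation_quotient_span_one (h : (Fintype.card α : k) = 0) :
    Module.finrank k (augmentation α k ⧸
      (Submodule.span k {fun _ => (1 : k)}).comap (augmentation α k).subtype) =
      Fintype.card α - 2 := by
  have := Submodule.finrank_quotient_add_finrank
    ((Submodule.span k {fun _ => (1 : k)}).comap (augmentation α k).subtype)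
  rw [(Submodule.comapSubtypeEquivOfLe (span_one_le_augmentation h)).finrank_eq, finrank_span_one,
    finrank_augmentation] at this
  omega

end Field

end PermutationModule

namespace CharTwo

variable {R : Type*} [Ring R] [CharP R 2]

lemma nsmul_eq_self_of_odd {n : ℕ} (hn : Odd n) (x : R) : n • x = x := by
  rw [nsmul_eq_mul, natCast_eq_one_of_odd_of_two_eq_zero hn two_eq_zero, one_mul]

lemma nsmul_eq_zero_of_even {n : ℕ} (hn : Even n) (x : R) : n • x = 0 := by
  rw [nsmul_eq_mul, natCast_eq_zero_of_even_of_two_eq_zero hn two_eq_zero, zero_mul]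

end CharTwo

open PermutationModule

instance Projectivization.matrixGeneralLinearGroup_is_two_pretransitive {K ι : Type*} [Field K]
    [Fintype ι] [DecidableEq ι] : IsMultiplyPretransitive (GL ι K) (ℙ K (ι → K)) 2 :=
  IsPretransitive.of_embedding
    (f := (⟨id, fun _ _ => rfl⟩ : ℙ K (ι → K) →ₑ[Matrix.SpecialLinearGroup.toGL] ℙ K (ι → K)))
    Function.surjective_id

section ProjectiveLine

variable {F : Type*} [Field F] [DecidableEq F]

def affineGL (a : Fˣ) (b : F) : GL (Fin 2) F :=
  GeneralLinearGroup.mkOfDetNeZero !![(a : F), b; 0, 1] (by simp)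

lemma affineGL_smul_coe (a : Fˣ) (b x : F) :
    affineGL a b • (x : OnePoint F) = ((a * x + b : F) : OnePoint F) := by
  simp [smul_some_eq_ite, affineGL]

lemma affineGL_smul_infty (a : Fˣ) (b : F) : affineGL a b • (∞ : OnePoint F) = ∞ := by
  simp [smul_infty_eq_self_iff, affineGL]

variable [Fintype F] {M : Type*} [AddCommMonoid M]

lemma sum_projLine [Fintype (ℙ F (Fin 2 → F))] (f : ℙ F (Fin 2 → F) → M) :
    ∑ x, f x = f (equivProjectivization F ∞) + ∑ y : F, f (equivProjectivization F y) := by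
  rw [← (equivProjectivization F).sum_comp]
  exact Fintype.sum_option _

lemma sum_eq_add_sum_units (f : F → M) : ∑ y, f y = f 0 + ∑ u : Fˣ, f u := by
  rw [Fintype.sum_eq_add_sum_subtype_ne f 0, ← unitsEquivNeZero.sum_comp]
  rfl

lemma sum_translate_smul_infty (f : OnePoint F → M) :
    ∑ b : F, f (affineGL 1 b • ∞) = Fintype.card F • f ∞ := by
  simp [affineGL_smul_infty]

lemma sum_translate_smul_coe (f : OnePoint F → M) (x : F) :
    ∑ b : F, f (affineGL 1 b • (x : OnePoint F)) = ∑ y : F, f y := by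
  simpa [affineGL_smul_coe] using Equiv.sum_comp (Equiv.addLeft x) (fun y => f y)

lemma sum_scale_smul_infty (f : OnePoint F → M) :
    ∑ u : Fˣ, f (affineGL u 0 • ∞) = Fintype.card Fˣ • f ∞ := by
  simp [affineGL_smul_infty]

lemma sum_scale_smul_zero (f : OnePoint F → M) :
    ∑ u : Fˣ, f (affineGL u 0 • ((0 : F) : OnePoint F)) = Fintype.card Fˣ • f (0 : F) := by
  simp [affineGL_smul_coe]

lemma sum_scale_smul_coe (f : OnePoint F → M) {x : F} (hx : x ≠ 0) :
    ∑ u : Fˣ, f (affineGL u 0 • (x : OnePoint F)) = ∑ u : Fˣ, f (u : F) := by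
  simpa [affineGL_smul_coe] using
    Equiv.sum_comp (Equiv.mulRight (Units.mk0 x hx)) (fun u => f (u : F))

variable {k : Type*} [Field k] [CharP k 2] [DecidableEq (ℙ F (Fin 2 → F))]

lemma sum_funLeft_scale (hq : Odd (Fintype.card F)) (f : ℙ F (Fin 2 → F) → k) :
    ∑ u : Fˣ, LinearMap.funLeft k k (affineGL u 0 • ·) f =
      Function.const _ (∑ u : Fˣ, f (equivProjectivization F (u : F))) +
        Pi.single (equivProjectivization F (0 : F))
          (∑ u : Fˣ, f (equivProjectivization F (u : F))) +
        Pi.single (equivProjectivization F ∞) (∑ u : Fˣ, f (equivProjectivization F (u : F))) := by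
  have hunits : Even (Fintype.card Fˣ) := by
    rw [Fintype.card_units]
    exact Nat.Odd.sub_odd hq odd_one
  have h0 : equivProjectivization F (0 : F) ≠ equivProjectivization F ∞ :=
    (equivProjectivization F).injective.ne (coe_ne_infty 0)
  funext x
  obtain ⟨x, rfl⟩ := (equivProjectivization F).surjective x
  simp only [Finset.sum_apply, LinearMap.funLeft_apply, ← equivProjectivization_smul,
    Pi.add_apply, Function.const_apply]
  cases x with
  | infty =>
    rw [sum_scale_smul_infty (fun y => f (equivProjectivization F y)), Pi.single_eq_same,
      Pi.single_eq_of_ne h0.symm, CharTwo.nsmul_eq_zero_of_even hunits, add_zero,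
      CharTwo.add_self_eq_zero]
  | coe x =>
    rcases eq_or_ne x 0 with rfl | hx
    · rw [sum_scale_smul_zero (fun y => f (equivProjectivization F y)), Pi.single_eq_same,
        Pi.single_eq_of_ne h0, CharTwo.nsmul_eq_zero_of_even hunits, add_zero,
        CharTwo.add_self_eq_zero]
    · have hx' : equivProjectivization F x ≠ equivProjectivization F (0 : F) :=
        (equivProjectivization F).injective.ne (coe_injective.ne hx)
      rw [sum_scale_smul_coe (fun y => f (equivProjectivization F y)) hx, Pi.single_eq_of_ne hx',
        Pi.single_eq_of_ne ((equivProjectivization F).injective.ne (coe_ne_infty x)), add_zero,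
        add_zero]

variable [Fintype (ℙ F (Fin 2 → F))]

lemma sum_funLeft_translate (hq : Odd (Fintype.card F)) (f : ℙ F (Fin 2 → F) → k) :
    ∑ b : F, LinearMap.funLeft k k (affineGL 1 b • ·) f =
      Function.const _ (∑ y : F, f (equivProjectivization F y)) +
        Pi.single (equivProjectivization F ∞) (∑ x, f x) := by
  funext x
  obtain ⟨x, rfl⟩ := (equivProjectivization F).surjective x
  simp only [Finset.sum_apply, LinearMap.funLeft_apply, ← equivProjectivization_smul,
    Pi.add_apply, Function.const_apply]
  cases x with
  | infty =>
    rw [sum_translate_smul_infty (fun y => f (equivProjectivization F y)), Pi.single_eq_same,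
      sum_projLine f, CharTwo.nsmul_eq_self_of_odd hq, add_left_comm, CharTwo.add_self_eq_zero,
      add_zero]
  | coe x =>
    rw [sum_translate_smul_coe (fun y => f (equivProjectivization F y)), Pi.single_eq_of_ne
      ((equivProjectivization F).injective.ne (coe_ne_infty x)), add_zero]

end ProjectiveLine

section Invariant

variable {F k : Type*} [Field F] [Fintype F] [Fintype (ℙ F (Fin 2 → F))] [Field k] [CharP k 2]

lemma card_projLine : Fintype.card (ℙ F (Fin 2 → F)) = Fintype.card F + 1 := by
  classical
  rw [← Fintype.card_congr (equivProjectivization F)]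
  exact Fintype.card_option

lemma augmentation_le_of_apply_ne (hq : Odd (Fintype.card F))
    {U : Submodule k (ℙ F (Fin 2 → F) → k)} (hU : IsInvariant (GL (Fin 2) F) U)
    {f : ℙ F (Fin 2 → F) → k} (hf : f ∈ U) {a b : ℙ F (Fin 2 → F)} (hab : f a ≠ f b) :
    augmentation _ k ≤ U := by
  classical
  set e := equivProjectivization F
  have h0 : e (0 : F) ≠ e ∞ := e.injective.ne (coe_ne_infty 0)
  have h1 : e (1 : F) ≠ e ∞ := e.injective.ne (coe_ne_infty 1)
  have h10 : e (1 : F) ≠ e (0 : F) := e.injective.ne (coe_injective.ne one_ne_zero)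
  by_cases hsum : ∑ x, f x = 0
  · obtain ⟨g, hga, hgb⟩ := (is_two_pretransitive_iff (G := GL (Fin 2) F)).mp inferInstance h0
      (ne_of_apply_ne f hab)
    set f₂ := LinearMap.funLeft k k (g • ·) f
    have hmem := U.sum_mem (t := Finset.univ) fun u _ => hU (affineGL u 0) f₂ (hU g f hf)
    rw [sum_funLeft_scale hq] at hmem
    have hsum₂ : ∑ x, f₂ x = 0 := ((MulAction.bijective g).sum_comp f).trans hsum
    rw [sum_projLine, sum_eq_add_sum_units (fun y : F => f₂ (e y))] at hsum₂
    have hne : ∑ u : Fˣ, f₂ (e u) ≠ 0 := by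
      intro hS
      have hf₂a : f₂ (e (0 : F)) = f a := congrArg f hga
      have hf₂b : f₂ (e ∞) = f b := congrArg f hgb
      rw [hS, add_zero, hf₂a, hf₂b, CharTwo.add_eq_zero] at hsum₂
      exact hab hsum₂.symm
    exact augmentation_le_of_single_sub_single_mem hU h10.symm
      (single_sub_single_mem_of_const_add_mem hU h0 h1 (isUnit_iff_ne_zero.mpr hne) hmem)
  · have hmem := U.sum_mem (t := Finset.univ) fun b _ => hU (affineGL 1 b) f hf
    rw [sum_funLeft_translate hq, ← add_zero (_ + Pi.single _ _), ← Pi.single_zero (e (0 : F))]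
      at hmem
    exact augmentation_le_of_single_sub_single_mem hU h1.symm
      (single_sub_single_mem_of_const_add_mem hU h0.symm h10 (isUnit_iff_ne_zero.mpr hsum) hmem)

lemma le_span_one_or_augmentation_le (hq : Odd (Fintype.card F))
    {U : Submodule k (ℙ F (Fin 2 → F) → k)} (hU : IsInvariant (GL (Fin 2) F) U) :
    U ≤ Submodule.span k {fun _ => (1 : k)} ∨ augmentation _ k ≤ U := by
  refine or_iff_not_imp_left.mpr fun hle => ?_
  obtain ⟨f, hf, hf_not_const⟩ := SetLike.not_le_iff_exists.mp hle
  obtain ⟨a, b, hab⟩ : ∃ a b, f a ≠ f b := by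
    by_contra! hconst
    obtain ⟨a⟩ := (inferInstance : Nonempty (ℙ F (Fin 2 → F)))
    exact hf_not_const
      (Submodule.mem_span_singleton.mpr ⟨f a, funext fun x => by simp [hconst a x]⟩)
  exact augmentation_le_of_apply_ne hq hU hf hab

end Invariant

theorem permutation_module_uniserial_general
    (k : Type) [Field k] (hchar : ringChar k = 2)
    (q : ℕ) (hodd : Odd q)
    (F : Type) [Field F] [Fintype F] (hF : Fintype.card F = q)
    (V₁ W : Submodule k (ℙ F (Fin 2 → F) → k))
    (hV₁ : V₁ = Submodule.span k {fun _ => (1 : k)})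
    (hW : ∀ f : ℙ F (Fin 2 → F) → k, f ∈ W ↔ ∑ᶠ x, f x = 0) :
    (⊥ : Submodule k (ℙ F (Fin 2 → F) → k)) < V₁ ∧ V₁ < W ∧ W < ⊤ ∧
    Module.finrank k V₁ = 1 ∧
    Module.finrank k (W ⧸ V₁.comap W.subtype) = q - 1 ∧
    (∀ U : Submodule k (ℙ F (Fin 2 → F) → k),
      (∀ g : GL (Fin 2) F, ∀ f ∈ U, (fun x => f (projAct F g x)) ∈ U) →
      U = ⊥ ∨ U = V₁ ∨ U = W ∨ U = ⊤) := by
  have : CharP k 2 := ringChar.of_eq hchar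
  let : Fintype (ℙ F (Fin 2 → F)) := Fintype.ofFinite _
  subst hV₁ hF
  obtain rfl : W = augmentation _ k := by
    ext f
    rw [hW, mem_augmentation, finsum_eq_sum_of_fintype]
  have hcard : (Fintype.card (ℙ F (Fin 2 → F)) : k) = 0 := by
    rw [card_projLine]
    exact natCast_eq_zero_of_even_of_two_eq_zero hodd.add_one CharTwo.two_eq_zero
  have hcard_gt : 2 < Fintype.card (ℙ F (Fin 2 → F)) := by
    have := Fintype.one_lt_card (α := F)
    rw [card_projLine]
    omega
  refine ⟨isAtom_span_one.bot_lt, span_one_lt_augmentation hcard hcard_gt,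
    isCoatom_augmentation.lt_top, finrank_span_one, ?_, fun U hU => ?_⟩
  · rw [finrank_augmentation_quotient_span_one hcard, card_projLine]
    omega
  · rcases le_span_one_or_augmentation_le hodd hU with h | h
    · rcases isAtom_span_one.le_iff.mp h with h | h <;> simp [h]
    · rcases isCoatom_augmentation.le_iff.mp h with h | h <;> simp [h]

/-- For `q` an odd prime power and `k` a field of characteristic `2`, the
permutation module `V = k[ℙ¹(F_q)]` for `PGL₂(F_q)` is uniserial with composition factors
`(V₁, V₂, V₁)`: its invariant submodules form the chain `0 < V₁ < W < V`, where `V₁` is the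
trivial `1`-dimensional submodule of constant functions, `W` is the augmentation submodule,
and `V₂ = W/V₁` is the `(q-1)`-dimensional simple composition factor. -/
theorem permutation_module_uniserial
    (k : Type) [Field k] (hchar : ringChar k = 2)
    (q : ℕ) (hq : IsPrimePow q) (hodd : Odd q)
    (F : Type) [Field F] [Fintype F] (hF : Fintype.card F = q)
    (V₁ W : Submodule k (ℙ F (Fin 2 → F) → k))
    (hV₁ : V₁ = Submodule.span k {fun _ => (1 : k)})
    (hW : ∀ f : ℙ F (Fin 2 → F) → k, f ∈ W ↔ ∑ᶠ x, f x = 0) :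
    (⊥ : Submodule k (ℙ F (Fin 2 → F) → k)) < V₁ ∧ V₁ < W ∧ W < ⊤ ∧
    Module.finrank k V₁ = 1 ∧
    Module.finrank k (W ⧸ V₁.comap W.subtype) = q - 1 ∧
    (∀ U : Submodule k (ℙ F (Fin 2 → F) → k),
      (∀ g : GL (Fin 2) F, ∀ f ∈ U, (fun x => f (projAct F g x)) ∈ U) →
      U = ⊥ ∨ U = V₁ ∨ U = W ∨ U = ⊤) :=
  permutation_module_uniserial_general k hchar q hodd F hF V₁ W hV₁ hW
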